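/- arXiv:math/0505204 — 6 statements merged into one kernel-verified Lean document; each statement's English description precedes it below -/
import Mathlib

section
/- Let P, Q ∈ Γ_n and let r, R satisfy 0 < r ≤ p_i/q_i ≤ R < ∞ for all i. If s ≤ 0 then ((1+r)/r^s)·Φ_s(P||Q) ≤ J(P||Q) ≤ ((1+R)/R^s)·Φ_s(P||Q), and if s ≥ 1 then ((1+R)/R^s)·Φ_s(P||Q) ≤ J(P||Q) ≤ ((1+r)/r^s)·Φ_s(P||Q). -/
open Real

/-- Relative information of type `s` (Cressie–Read generalization of Kullback–Leibler). -/
noncomputable def Phi {n : ℕ} (s : ℝ) (p q : Fin n → ℝ) : ℝ :=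
  if s = 0 then ∑ i, q i * Real.log (q i / p i)
  else if s = 1 then ∑ i, p i * Real.log (p i / q i)
  else (s * (s - 1))⁻¹ * ((∑ i, p i ^ s * q i ^ (1 - s)) - 1)

/-- Kullback–Leibler relative information `K(P‖Q)`. -/
noncomputable def KL {n : ℕ} (p q : Fin n → ℝ) : ℝ :=
  ∑ i, p i * Real.log (p i / q i)

/-- Relative J-divergence `D(P‖Q)`. -/
noncomputable def relJ {n : ℕ} (p q : Fin n → ℝ) : ℝ :=
  ∑ i, (p i - q i) * Real.log ((p i + q i) / (2 * q i))

/-- Relative JS-divergence `F(P‖Q)`. -/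
noncomputable def relJS {n : ℕ} (p q : Fin n → ℝ) : ℝ :=
  ∑ i, p i * Real.log (2 * p i / (p i + q i))

/-- Relative AG-divergence `G(P‖Q)`. -/
noncomputable def relAG {n : ℕ} (p q : Fin n → ℝ) : ℝ :=
  ∑ i, ((p i + q i) / 2) * Real.log ((p i + q i) / (2 * p i))

/-- J-divergence `J(P‖Q)`. -/
noncomputable def Jdiv {n : ℕ} (p q : Fin n → ℝ) : ℝ :=
  ∑ i, (p i - q i) * Real.log (p i / q i)

/-- JS-divergence (information radius) `I(P‖Q)`. -/
noncomputable def JSdiv {n : ℕ} (p q : Fin n → ℝ) : ℝ :=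
  (relJS p q + relJS q p) / 2

/-- AG-divergence `T(P‖Q)`. -/
noncomputable def AGdiv {n : ℕ} (p q : Fin n → ℝ) : ℝ :=
  (relAG p q + relAG q p) / 2

/-- Hellinger discrimination `h(P‖Q)`. -/
noncomputable def hell {n : ℕ} (p q : Fin n → ℝ) : ℝ :=
  (1 / 2) * ∑ i, (Real.sqrt (p i) - Real.sqrt (q i)) ^ 2


open Real

/-- Pointwise integrand of `Phi`. -/
noncomputable def psi (s x : ℝ) : ℝ :=
  if s = 0 then x - 1 - Real.log x
  else if s = 1 then x * Real.log x - x + 1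
  else (x ^ s - 1 - s * (x - 1)) / (s * (s - 1))

/-- Derivative of `psi`. -/
noncomputable def dpsi (s x : ℝ) : ℝ :=
  if s = 1 then Real.log x else (x ^ (s - 1) - 1) / (s - 1)

lemma psi_one (s : ℝ) : psi s 1 = 0 := by
  unfold psi; split_ifs <;> simp

lemma dpsi_one (s : ℝ) : dpsi s 1 = 0 := by
  unfold dpsi; split_ifs <;> simp

lemma psi_hasDeriv (s : ℝ) {x : ℝ} (hx : 0 < x) : HasDerivAt (psi s) (dpsi s x) x := by
  rcases eq_or_ne s 0 with h0 | h0
  · subst h0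
    have hps : psi 0 = fun y : ℝ => y - 1 - Real.log y := by
      funext y; simp [psi]
    rw [hps]
    have h := ((hasDerivAt_id x).sub_const 1).sub (Real.hasDerivAt_log hx.ne')
    refine h.congr_deriv ?_
    simp [dpsi, Real.rpow_neg_one]
    ring
  rcases eq_or_ne s 1 with h1 | h1
  · subst h1
    have hps : psi 1 = fun y : ℝ => y * Real.log y - y + 1 := by
      funext y; simp [psi]
    rw [hps]
    have h := (((hasDerivAt_id x).mul (Real.hasDerivAt_log hx.ne')).sub (hasDerivAt_id x)).add_const 1
    refine h.congr_deriv ?_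
    simp [dpsi]
    field_simp
    ring
  · have hps : psi s = fun y : ℝ => (y ^ s - 1 - s * (y - 1)) / (s * (s - 1)) := by
      funext y; simp [psi, h0, h1]
    rw [hps]
    have hrp : HasDerivAt (fun y : ℝ => y ^ s) (s * x ^ (s - 1)) x :=
      Real.hasDerivAt_rpow_const (Or.inl hx.ne')
    have h := (((hrp.sub_const 1).sub (((hasDerivAt_id x).sub_const 1).const_mul s)).div_const (s * (s - 1)))
    refine h.congr_deriv ?_
    have hs1 : s - 1 ≠ 0 := sub_ne_zero.mpr h1
    simp [dpsi, h1]
    field_simp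

lemma dpsi_hasDeriv (s : ℝ) {x : ℝ} (hx : 0 < x) : HasDerivAt (dpsi s) (x ^ (s - 2)) x := by
  rcases eq_or_ne s 1 with h1 | h1
  · subst h1
    have hps : dpsi 1 = Real.log := by funext y; simp [dpsi]
    rw [hps]
    have h := Real.hasDerivAt_log hx.ne'
    convert h using 1
    rw [show (1 : ℝ) - 2 = -1 by norm_num, Real.rpow_neg_one]
  · have hps : dpsi s = fun y : ℝ => (y ^ (s - 1) - 1) / (s - 1) := by
      funext y; simp [dpsi, h1]
    rw [hps]
    have hrp : HasDerivAt (fun y : ℝ => y ^ (s - 1)) ((s - 1) * x ^ (s - 1 - 1)) x :=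
      Real.hasDerivAt_rpow_const (Or.inl hx.ne')
    have h := (hrp.sub_const 1).div_const (s - 1)
    refine h.congr_deriv ?_
    have hs1 : s - 1 ≠ 0 := sub_ne_zero.mpr h1
    rw [show s - 1 - 1 = s - 2 by ring]
    field_simp

lemma rpow_combine {t : ℝ} (ht : 0 < t) (s : ℝ) :
    (t ^ (1 - s) + t ^ (-s)) * t ^ (s - 2) = t⁻¹ + (t ^ 2)⁻¹ := by
  rw [add_mul, ← Real.rpow_add ht, ← Real.rpow_add ht,
    show (1 - s) + (s - 2) = -1 by ring, show (-s) + (s - 2) = -2 by ring,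
    Real.rpow_neg_one, Real.rpow_neg ht.le,
    show (2 : ℝ) = ((2 : ℕ) : ℝ) by norm_num, Real.rpow_natCast]

lemma key_le (s c a b : ℝ) (ha : 0 < a) (ha1 : a ≤ 1) (h1b : 1 ≤ b)
    (hc : ∀ t ∈ Set.Icc a b, c ≤ t ^ (1 - s) + t ^ (-s))
    {x : ℝ} (hx : x ∈ Set.Icc a b) :
    c * psi s x ≤ (x - 1) * Real.log x := by
  set F : ℝ → ℝ := fun t => (t - 1) * Real.log t - c * psi s t with hFdef
  set F' : ℝ → ℝ := fun t => Real.log t + 1 - t⁻¹ - c * dpsi s t with hF'def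
  have hder : ∀ t : ℝ, 0 < t → HasDerivAt F (F' t) t := by
    intro t ht
    have h1 : HasDerivAt (fun u : ℝ => (u - 1) * Real.log u)
        (1 * Real.log t + (t - 1) * t⁻¹) t :=
      ((hasDerivAt_id t).sub_const 1).mul (Real.hasDerivAt_log ht.ne')
    have h := h1.sub ((psi_hasDeriv s ht).const_mul c)
    refine h.congr_deriv ?_
    simp only [hF'def]
    field_simp
    ring
  have hder' : ∀ t : ℝ, 0 < t → HasDerivAt F' (t⁻¹ + (t ^ 2)⁻¹ - c * t ^ (s - 2)) t := by
    intro t ht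
    have h1 : HasDerivAt (fun u : ℝ => Real.log u + 1 - u⁻¹) (t⁻¹ - (-(t ^ 2)⁻¹)) t :=
      (((Real.hasDerivAt_log ht.ne').add_const 1).sub (hasDerivAt_inv ht.ne'))
    have h := h1.sub ((dpsi_hasDeriv s ht).const_mul c)
    refine h.congr_deriv ?_
    ring
  have hx0 : ∀ t ∈ Set.Icc a b, (0 : ℝ) < t := fun t ht => lt_of_lt_of_le ha ht.1
  have hmono : MonotoneOn F' (Set.Icc a b) := by
    apply monotoneOn_of_deriv_nonneg (convex_Icc a b)
    · exact fun t ht => ((hder' t (hx0 t ht)).continuousAt).continuousWithinAt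
    · intro t ht
      rw [interior_Icc] at ht
      exact ((hder' t (hx0 t (Set.Ioo_subset_Icc_self ht))).differentiableAt).differentiableWithinAt
    · intro t ht
      rw [interior_Icc] at ht
      have htm := Set.Ioo_subset_Icc_self ht
      have ht0 := hx0 t htm
      rw [(hder' t ht0).deriv]
      have hcb := hc t htm
      have hkey : c * t ^ (s - 2) ≤ t⁻¹ + (t ^ 2)⁻¹ := by
        calc c * t ^ (s - 2) ≤ (t ^ (1 - s) + t ^ (-s)) * t ^ (s - 2) :=
              mul_le_mul_of_nonneg_right hcb (Real.rpow_nonneg ht0.le _)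
          _ = t⁻¹ + (t ^ 2)⁻¹ := rpow_combine ht0 s
      linarith
  have h1mem : (1 : ℝ) ∈ Set.Icc a b := ⟨ha1, h1b⟩
  have hF'1 : F' 1 = 0 := by simp [hF'def, dpsi_one]
  have hF1 : F 1 = 0 := by simp [hFdef, psi_one]
  have hgoal : 0 ≤ F x := by
    rcases le_total x 1 with hx1 | hx1
    · have hanti : AntitoneOn F (Set.Icc a 1) := by
        apply antitoneOn_of_deriv_nonpos (convex_Icc a 1)
        · exact fun t ht => (hder t (lt_of_lt_of_le ha ht.1)).continuousAt.continuousWithinAt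
        · intro t ht
          rw [interior_Icc] at ht
          exact (hder t (ha.trans ht.1)).differentiableAt.differentiableWithinAt
        · intro t ht
          rw [interior_Icc] at ht
          rw [(hder t (ha.trans ht.1)).deriv]
          have h := hmono ⟨ht.1.le, ht.2.le.trans h1b⟩ h1mem ht.2.le
          rw [hF'1] at h; exact h
      have := hanti ⟨hx.1, hx1⟩ ⟨ha1, le_refl 1⟩ hx1
      rw [hF1] at this; exact this
    · have hmon : MonotoneOn F (Set.Icc 1 b) := by
        apply monotoneOn_of_deriv_nonneg (convex_Icc 1 b)
        · exact fun t ht => (hder t (lt_of_lt_of_le one_pos ht.1)).continuousAt.continuousWithinAt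
        · intro t ht
          rw [interior_Icc] at ht
          exact (hder t (one_pos.trans ht.1)).differentiableAt.differentiableWithinAt
        · intro t ht
          rw [interior_Icc] at ht
          rw [(hder t (one_pos.trans ht.1)).deriv]
          have h := hmono h1mem ⟨ha1.trans ht.1.le, ht.2.le⟩ ht.1.le
          rw [hF'1] at h; exact h
      have := hmon ⟨le_refl 1, h1b⟩ ⟨hx1, hx.2⟩ hx1
      rw [hF1] at this; exact this
  simp only [hFdef, sub_nonneg] at hgoal
  exact hgoal

lemma key_ge (s C a b : ℝ) (ha : 0 < a) (ha1 : a ≤ 1) (h1b : 1 ≤ b)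
    (hC : ∀ t ∈ Set.Icc a b, t ^ (1 - s) + t ^ (-s) ≤ C)
    {x : ℝ} (hx : x ∈ Set.Icc a b) :
    (x - 1) * Real.log x ≤ C * psi s x := by
  set F : ℝ → ℝ := fun t => C * psi s t - (t - 1) * Real.log t with hFdef
  set F' : ℝ → ℝ := fun t => C * dpsi s t - (Real.log t + 1 - t⁻¹) with hF'def
  have hder : ∀ t : ℝ, 0 < t → HasDerivAt F (F' t) t := by
    intro t ht
    have h1 : HasDerivAt (fun u : ℝ => (u - 1) * Real.log u)
        (1 * Real.log t + (t - 1) * t⁻¹) t :=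
      ((hasDerivAt_id t).sub_const 1).mul (Real.hasDerivAt_log ht.ne')
    have h := ((psi_hasDeriv s ht).const_mul C).sub h1
    refine h.congr_deriv ?_
    simp only [hF'def]
    field_simp
    ring
  have hder' : ∀ t : ℝ, 0 < t → HasDerivAt F' (C * t ^ (s - 2) - (t⁻¹ + (t ^ 2)⁻¹)) t := by
    intro t ht
    have h1 : HasDerivAt (fun u : ℝ => Real.log u + 1 - u⁻¹) (t⁻¹ - (-(t ^ 2)⁻¹)) t :=
      (((Real.hasDerivAt_log ht.ne').add_const 1).sub (hasDerivAt_inv ht.ne'))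
    have h := ((dpsi_hasDeriv s ht).const_mul C).sub h1
    refine h.congr_deriv ?_
    ring
  have hx0 : ∀ t ∈ Set.Icc a b, (0 : ℝ) < t := fun t ht => lt_of_lt_of_le ha ht.1
  have hmono : MonotoneOn F' (Set.Icc a b) := by
    apply monotoneOn_of_deriv_nonneg (convex_Icc a b)
    · exact fun t ht => ((hder' t (hx0 t ht)).continuousAt).continuousWithinAt
    · intro t ht
      rw [interior_Icc] at ht
      exact ((hder' t (hx0 t (Set.Ioo_subset_Icc_self ht))).differentiableAt).differentiableWithinAt
    · intro t ht
      rw [interior_Icc] at ht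
      have htm := Set.Ioo_subset_Icc_self ht
      have ht0 := hx0 t htm
      rw [(hder' t ht0).deriv]
      have hcb := hC t htm
      have hkey : t⁻¹ + (t ^ 2)⁻¹ ≤ C * t ^ (s - 2) := by
        calc t⁻¹ + (t ^ 2)⁻¹ = (t ^ (1 - s) + t ^ (-s)) * t ^ (s - 2) := (rpow_combine ht0 s).symm
          _ ≤ C * t ^ (s - 2) :=
              mul_le_mul_of_nonneg_right hcb (Real.rpow_nonneg ht0.le _)
      linarith
  have h1mem : (1 : ℝ) ∈ Set.Icc a b := ⟨ha1, h1b⟩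
  have hF'1 : F' 1 = 0 := by simp [hF'def, dpsi_one]
  have hF1 : F 1 = 0 := by simp [hFdef, psi_one]
  have hgoal : 0 ≤ F x := by
    rcases le_total x 1 with hx1 | hx1
    · have hanti : AntitoneOn F (Set.Icc a 1) := by
        apply antitoneOn_of_deriv_nonpos (convex_Icc a 1)
        · exact fun t ht => (hder t (lt_of_lt_of_le ha ht.1)).continuousAt.continuousWithinAt
        · intro t ht
          rw [interior_Icc] at ht
          exact (hder t (ha.trans ht.1)).differentiableAt.differentiableWithinAt
        · intro t ht
          rw [interior_Icc] at ht
          rw [(hder t (ha.trans ht.1)).deriv]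
          have h := hmono ⟨ht.1.le, ht.2.le.trans h1b⟩ h1mem ht.2.le
          rw [hF'1] at h; exact h
      have := hanti ⟨hx.1, hx1⟩ ⟨ha1, le_refl 1⟩ hx1
      rw [hF1] at this; exact this
    · have hmon : MonotoneOn F (Set.Icc 1 b) := by
        apply monotoneOn_of_deriv_nonneg (convex_Icc 1 b)
        · exact fun t ht => (hder t (lt_of_lt_of_le one_pos ht.1)).continuousAt.continuousWithinAt
        · intro t ht
          rw [interior_Icc] at ht
          exact (hder t (one_pos.trans ht.1)).differentiableAt.differentiableWithinAt
        · intro t ht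
          rw [interior_Icc] at ht
          rw [(hder t (one_pos.trans ht.1)).deriv]
          have h := hmono h1mem ⟨ha1.trans ht.1.le, ht.2.le⟩ ht.1.le
          rw [hF'1] at h; exact h
      have := hmon ⟨le_refl 1, h1b⟩ ⟨hx1, hx.2⟩ hx1
      rw [hF1] at this; exact this
  simp only [hFdef, sub_nonneg] at hgoal
  exact hgoal

lemma Phi_eq {n : ℕ} (s : ℝ) (p q : Fin n → ℝ) (hp : ∀ i, 0 < p i) (hq : ∀ i, 0 < q i)
    (hp1 : ∑ i, p i = 1) (hq1 : ∑ i, q i = 1) :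
    Phi s p q = ∑ i, q i * psi s (p i / q i) := by
  rcases eq_or_ne s 0 with h0 | h0
  · subst h0
    have hterm : ∀ i, q i * psi 0 (p i / q i)
        = p i - q i - q i * Real.log (p i / q i) := by
      intro i
      unfold psi
      rw [if_pos rfl]
      have e : q i * (p i / q i) = p i := by rw [mul_comm, div_mul_cancel₀ _ (hq i).ne']
      linear_combination e
    have hlog : ∀ i, Real.log (q i / p i) = -Real.log (p i / q i) := by
      intro i
      rw [← Real.log_inv]
      congr 1
      rw [inv_div]
    rw [Finset.sum_congr rfl fun i _ => hterm i, Finset.sum_sub_distrib,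
      Finset.sum_sub_distrib, hp1, hq1]
    simp only [Phi, if_pos rfl]
    rw [Finset.sum_congr rfl (fun i (_ : i ∈ Finset.univ) => by rw [hlog i] : ∀ i ∈ Finset.univ, q i * Real.log (q i / p i) = q i * -Real.log (p i / q i))]
    simp [Finset.sum_neg_distrib]
  rcases eq_or_ne s 1 with h1 | h1
  · subst h1
    have hterm : ∀ i, q i * psi 1 (p i / q i)
        = p i * Real.log (p i / q i) - p i + q i := by
      intro i
      unfold psi
      rw [if_neg one_ne_zero, if_pos rfl]
      have e : q i * (p i / q i) = p i := by rw [mul_comm, div_mul_cancel₀ _ (hq i).ne']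
      linear_combination (Real.log (p i / q i) - 1) * e
    rw [Finset.sum_congr rfl fun i _ => hterm i]
    unfold Phi
    rw [if_neg one_ne_zero, if_pos rfl]
    rw [Finset.sum_add_distrib, Finset.sum_sub_distrib, hp1, hq1]
    ring
  · have hterm : ∀ i, q i * psi s (p i / q i)
        = (p i ^ s * q i ^ (1 - s) - q i - s * (p i - q i)) / (s * (s - 1)) := by
      intro i
      simp only [psi, if_neg h0, if_neg h1]
      have hqs : q i ^ s ≠ 0 := (Real.rpow_pos_of_pos (hq i) s).ne'
      have e1 : (p i / q i) ^ s = p i ^ s / q i ^ s := Real.div_rpow (hp i).le (hq i).le s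
      have e2 : q i ^ (1 - s) = q i / q i ^ s := by
        rw [Real.rpow_sub (hq i), Real.rpow_one]
      have e : q i * (p i / q i) = p i := by rw [mul_comm, div_mul_cancel₀ _ (hq i).ne']
      rw [e1, e2]
      linear_combination (-(s / (s * (s - 1)))) * e
    rw [Finset.sum_congr rfl fun i _ => hterm i]
    simp only [Phi, if_neg h0, if_neg h1]
    rw [← Finset.sum_div, Finset.sum_sub_distrib, Finset.sum_sub_distrib, hq1,
      ← Finset.mul_sum, Finset.sum_sub_distrib, hp1, hq1]
    have hs : s * (s - 1) ≠ 0 := mul_ne_zero h0 (sub_ne_zero.mpr h1)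
    field_simp
    ring

lemma Jdiv_eq {n : ℕ} (p q : Fin n → ℝ) (hq : ∀ i, 0 < q i) :
    Jdiv p q = ∑ i, q i * ((p i / q i - 1) * Real.log (p i / q i)) := by
  unfold Jdiv
  refine Finset.sum_congr rfl fun i _ => ?_
  have e : q i * (p i / q i) = p i := by rw [mul_comm, div_mul_cancel₀ _ (hq i).ne']
  linear_combination (-Real.log (p i / q i)) * e

theorem stmt12 {n : ℕ} (hn : 2 ≤ n) (p q : Fin n → ℝ)
    (hp : ∀ i, 0 < p i) (hq : ∀ i, 0 < q i)
    (hp1 : ∑ i, p i = 1) (hq1 : ∑ i, q i = 1)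
    (r R : ℝ) (hr : 0 < r)
    (hlow : ∀ i, r ≤ p i / q i) (hupp : ∀ i, p i / q i ≤ R) (s : ℝ) :
    (s ≤ 0 →
      ((1 + r) / r ^ s) * Phi s p q ≤ Jdiv p q ∧
        Jdiv p q ≤ ((1 + R) / R ^ s) * Phi s p q) ∧
    (1 ≤ s →
      ((1 + R) / R ^ s) * Phi s p q ≤ Jdiv p q ∧
        Jdiv p q ≤ ((1 + r) / r ^ s) * Phi s p q) := by
  have hsum : ∑ i, q i * (p i / q i) = 1 := by
    rw [← hp1]
    exact Finset.sum_congr rfl fun i _ => by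
      rw [mul_comm, div_mul_cancel₀ _ (hq i).ne']
  have hr1 : r ≤ 1 := by
    have h : ∑ i, r * q i ≤ ∑ i, q i * (p i / q i) :=
      Finset.sum_le_sum fun i _ => by
        rw [mul_comm r]
        exact mul_le_mul_of_nonneg_left (hlow i) (hq i).le
    rw [hsum, ← Finset.mul_sum, hq1, mul_one] at h
    exact h
  have hR1 : 1 ≤ R := by
    have h : ∑ i, q i * (p i / q i) ≤ ∑ i, q i * R :=
      Finset.sum_le_sum fun i _ => mul_le_mul_of_nonneg_left (hupp i) (hq i).le
    rw [hsum, ← Finset.sum_mul, hq1, one_mul] at h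
    exact h
  have hR0 : (0 : ℝ) < R := zero_lt_one.trans_le hR1
  have hmem : ∀ i, p i / q i ∈ Set.Icc r R := fun i => ⟨hlow i, hupp i⟩
  have c_eq : ∀ u : ℝ, 0 < u → (1 + u) / u ^ s = u ^ (1 - s) + u ^ (-s) := by
    intro u hu
    have hus : u ^ s ≠ 0 := (Real.rpow_pos_of_pos hu s).ne'
    rw [Real.rpow_sub hu, Real.rpow_one, Real.rpow_neg hu.le]
    field_simp
    ring
  have lower : ∀ c : ℝ, (∀ t ∈ Set.Icc r R, c ≤ t ^ (1 - s) + t ^ (-s)) →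
      c * Phi s p q ≤ Jdiv p q := by
    intro c hc
    rw [Phi_eq s p q hp hq hp1 hq1, Jdiv_eq p q hq, Finset.mul_sum]
    refine Finset.sum_le_sum fun i _ => ?_
    have h := key_le s c r R hr hr1 hR1 hc (hmem i)
    calc c * (q i * psi s (p i / q i)) = q i * (c * psi s (p i / q i)) := by ring
      _ ≤ q i * ((p i / q i - 1) * Real.log (p i / q i)) :=
          mul_le_mul_of_nonneg_left h (hq i).le
  have upper : ∀ C : ℝ, (∀ t ∈ Set.Icc r R, t ^ (1 - s) + t ^ (-s) ≤ C) →
      Jdiv p q ≤ C * Phi s p q := by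
    intro C hC
    rw [Phi_eq s p q hp hq hp1 hq1, Jdiv_eq p q hq, Finset.mul_sum]
    refine Finset.sum_le_sum fun i _ => ?_
    have h := key_ge s C r R hr hr1 hR1 hC (hmem i)
    calc q i * ((p i / q i - 1) * Real.log (p i / q i))
        ≤ q i * (C * psi s (p i / q i)) := mul_le_mul_of_nonneg_left h (hq i).le
      _ = C * (q i * psi s (p i / q i)) := by ring
  constructor
  · intro hs
    have h1s : (0 : ℝ) ≤ 1 - s := by linarith
    have hns : (0 : ℝ) ≤ -s := by linarith
    constructor
    · refine lower _ fun t ht => ?_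
      rw [c_eq r hr]
      have h1 := Real.rpow_le_rpow hr.le ht.1 h1s
      have h2 := Real.rpow_le_rpow hr.le ht.1 hns
      linarith
    · refine upper _ fun t ht => ?_
      rw [c_eq R hR0]
      have ht0 : 0 < t := hr.trans_le ht.1
      have h1 := Real.rpow_le_rpow ht0.le ht.2 h1s
      have h2 := Real.rpow_le_rpow ht0.le ht.2 hns
      linarith
  · intro hs
    have h1s : 1 - s ≤ 0 := by linarith
    have hns : -s ≤ 0 := by linarith
    constructor
    · refine lower _ fun t ht => ?_
      rw [c_eq R hR0]
      have ht0 : 0 < t := hr.trans_le ht.1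
      have h1 := Real.rpow_le_rpow_of_nonpos ht0 ht.2 h1s
      have h2 := Real.rpow_le_rpow_of_nonpos ht0 ht.2 hns
      linarith
    · refine upper _ fun t ht => ?_
      rw [c_eq r hr]
      have h1 := Real.rpow_le_rpow_of_nonpos hr ht.1 h1s
      have h2 := Real.rpow_le_rpow_of_nonpos hr ht.1 hns
      linarith
end

section
/- For all P, Q ∈ Γ_n, h(P||Q) ≤ (1/8)·J(P||Q). -/
open Real

private lemma g_monotone : MonotoneOn (fun x : ℝ => (x + 1) * Real.log x - 2 * (x - 1)) (Set.Ioi 0) := by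
  have hderiv : ∀ x ∈ interior (Set.Ioi (0:ℝ)), 0 ≤ deriv (fun x : ℝ => (x + 1) * Real.log x - 2 * (x - 1)) x := by
    intro x hx
    rw [interior_Ioi] at hx
    have hx0 : (0:ℝ) < x := hx
    have h1 := (((hasDerivAt_id x).add_const 1).mul (Real.hasDerivAt_log hx0.ne')).sub
        (((hasDerivAt_id x).sub_const 1).const_mul 2)
    simp only [id_eq] at h1
    have h1' : HasDerivAt (fun x : ℝ => (x + 1) * Real.log x - 2 * (x - 1)) (1 * Real.log x + (x + 1) * x⁻¹ - 2 * 1) x := h1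
    rw [h1'.deriv]
    have h2 : 1 - x⁻¹ ≤ Real.log x := Real.one_sub_inv_le_log_of_pos hx0
    have h3 : (x + 1) * x⁻¹ = 1 + x⁻¹ := by field_simp
    nlinarith [h2]
  apply monotoneOn_of_deriv_nonneg (convex_Ioi 0) _ _ hderiv
  · apply ContinuousOn.sub
    · exact ContinuousOn.mul (by fun_prop) (Real.continuousOn_log.mono (by intro x hx; exact ne_of_gt hx))
    · fun_prop
  · intro x hx
    rw [interior_Ioi] at hx
    exact (((differentiable_id.add_const 1).differentiableAt.mul
      (Real.differentiableAt_log (ne_of_gt hx))).sub (by fun_prop)).differentiableWithinAt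

private lemma key_g (u : ℝ) (hu : 0 < u) : 0 ≤ (u - 1) * ((u + 1) * Real.log u - 2 * (u - 1)) := by
  have h1 : (1:ℝ) ∈ Set.Ioi (0:ℝ) := by norm_num
  have hu' : u ∈ Set.Ioi (0:ℝ) := hu
  rcases le_total u 1 with h | h
  · have h2 := g_monotone hu' h1 h
    simp only [Real.log_one] at h2
    nlinarith [h2]
  · have h2 := g_monotone h1 hu' h
    simp only [Real.log_one] at h2
    nlinarith [h2]

private lemma key_pt (a b : ℝ) (ha : 0 < a) (hb : 0 < b) :
    4 * (Real.sqrt a - Real.sqrt b) ^ 2 ≤ (a - b) * Real.log (a / b) := by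
  set u : ℝ := Real.sqrt a / Real.sqrt b with hu
  have hsa : 0 < Real.sqrt a := Real.sqrt_pos.2 ha
  have hsb : 0 < Real.sqrt b := Real.sqrt_pos.2 hb
  have hupos : 0 < u := div_pos hsa hsb
  have hab : a = b * u ^ 2 := by
    rw [hu, div_pow, Real.sq_sqrt ha.le, Real.sq_sqrt hb.le]
    field_simp
  have hlog : Real.log (a / b) = 2 * Real.log u := by
    rw [hab]
    have : b * u ^ 2 / b = u ^ 2 := by field_simp
    rw [this, Real.log_pow]
    push_cast; ring
  have hsq : Real.sqrt a - Real.sqrt b = Real.sqrt b * (u - 1) := by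
    rw [hu, mul_sub, mul_div_assoc', mul_div_cancel_left₀ _ hsb.ne', mul_one]
  rw [hlog, hsq, hab]
  have hk := key_g u hupos
  have hb2 : (0:ℝ) < b := hb
  have hbb : Real.sqrt b ^ 2 = b := Real.sq_sqrt hb.le
  nlinarith [mul_nonneg hb2.le hk, hbb, sq_nonneg (u - 1)]

theorem stmt13 {n : ℕ} (hn : 2 ≤ n) (p q : Fin n → ℝ)
    (hp : ∀ i, 0 < p i) (hq : ∀ i, 0 < q i)
    (hp1 : ∑ i, p i = 1) (hq1 : ∑ i, q i = 1) :
    hell p q ≤ (1 / 8) * Jdiv p q := by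
  unfold hell Jdiv
  rw [div_mul_eq_mul_div, div_mul_eq_mul_div, div_le_div_iff₀ (by norm_num) (by norm_num)]
  have h : ∑ i, 4 * (Real.sqrt (p i) - Real.sqrt (q i)) ^ 2 ≤
      ∑ i, (p i - q i) * Real.log (p i / q i) :=
    Finset.sum_le_sum fun i _ => key_pt (p i) (q i) (hp i) (hq i)
  rw [← Finset.mul_sum] at h
  linarith
end

section
/- Let P, Q ∈ Γ_n and let r, R satisfy 0 < r ≤ p_i/q_i ≤ R < ∞ for all i. If s ≤ 0 then (r^{1−s}/(2(1+r)))·Φ_s(P||Q) ≤ I(P||Q) ≤ (R^{1−s}/(2(1+R)))·Φ_s(P||Q), and if s ≥ 1 then (R^{1−s}/(2(1+R)))·Φ_s(P||Q) ≤ I(P||Q) ≤ (r^{1−s}/(2(1+r)))·Φ_s(P||Q). -/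
open Real

noncomputable def FI (x : ℝ) : ℝ :=
  x / 2 * Real.log x - (x + 1) / 2 * Real.log (1 + x) + (x + 1) / 2 * Real.log 2

noncomputable def FI' (x : ℝ) : ℝ :=
  (Real.log x - Real.log (1 + x) + Real.log 2) / 2

noncomputable def FI2 (x : ℝ) : ℝ := 1 / (2 * x) - 1 / (2 * (1 + x))

noncomputable def G (s x : ℝ) : ℝ :=
  if s = 0 then x - 1 - Real.log x
  else if s = 1 then x * Real.log x - x + 1
  else (x ^ s - 1 - s * (x - 1)) / (s * (s - 1))

noncomputable def G1 (s x : ℝ) : ℝ :=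
  if s = 0 then 1 - x⁻¹
  else if s = 1 then Real.log x
  else (x ^ (s - 1) - 1) / (s - 1)

lemma hasDerivAt_FI {x : ℝ} (hx : 0 < x) : HasDerivAt FI (FI' x) x := by
  have hx1 : (0:ℝ) < 1 + x := by linarith
  have h1 : HasDerivAt (fun y : ℝ => y / 2 * Real.log y)
      ((1/2) * Real.log x + x / 2 * x⁻¹) x :=
    ((hasDerivAt_id' (x := x)).div_const 2).mul (Real.hasDerivAt_log hx.ne')
  have hin : HasDerivAt (fun y : ℝ => 1 + y) 1 x := (hasDerivAt_id' (x := x)).const_add 1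
  have hlog : HasDerivAt (fun y : ℝ => Real.log (1 + y)) ((1 + x)⁻¹ * 1) x :=
    (Real.hasDerivAt_log hx1.ne').comp x hin
  have h2 : HasDerivAt (fun y : ℝ => (y + 1) / 2 * Real.log (1 + y))
      ((1/2) * Real.log (1 + x) + (x + 1) / 2 * ((1 + x)⁻¹ * 1)) x :=
    (((hasDerivAt_id' (x := x)).add_const 1).div_const 2).mul hlog
  have h3 : HasDerivAt (fun y : ℝ => (y + 1) / 2 * Real.log 2) ((1/2) * Real.log 2) x := by
    simpa using (((hasDerivAt_id' (x := x)).add_const 1).div_const 2).mul_const (Real.log 2)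
  have h := (h1.sub h2).add h3
  have : FI' x = (1/2) * Real.log x + x / 2 * x⁻¹ -
      ((1/2) * Real.log (1 + x) + (x + 1) / 2 * ((1 + x)⁻¹ * 1)) + (1/2) * Real.log 2 := by
    rw [FI']; field_simp; ring
  rw [this]; exact h

lemma hasDerivAt_FI' {x : ℝ} (hx : 0 < x) : HasDerivAt FI' (FI2 x) x := by
  have hx1 : (0:ℝ) < 1 + x := by linarith
  have hin : HasDerivAt (fun y : ℝ => 1 + y) 1 x := (hasDerivAt_id' (x := x)).const_add 1
  have hlog : HasDerivAt (fun y : ℝ => Real.log (1 + y)) ((1 + x)⁻¹ * 1) x :=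
    (Real.hasDerivAt_log hx1.ne').comp x hin
  have h := (((Real.hasDerivAt_log hx.ne').sub hlog).add_const (Real.log 2)).div_const 2
  have : FI2 x = (x⁻¹ - (1 + x)⁻¹ * 1 + 0) / 2 := by
    rw [FI2]; field_simp; ring
  rw [this, add_zero]
  exact h

lemma hasDerivAt_G {s x : ℝ} (hx : 0 < x) : HasDerivAt (G s) (G1 s x) x := by
  rcases eq_or_ne s 0 with rfl | hs0
  · have hGeq : G (0:ℝ) = fun y : ℝ => y - 1 - Real.log y := by
      funext y; simp [G]
    have hG1 : G1 (0:ℝ) x = 1 - x⁻¹ := by simp [G1]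
    rw [hGeq, hG1]
    exact ((hasDerivAt_id' (x := x)).sub_const 1).sub (Real.hasDerivAt_log hx.ne')
  rcases eq_or_ne s 1 with rfl | hs1
  · have hGeq : G (1:ℝ) = fun y : ℝ => y * Real.log y - y + 1 := by
      funext y; simp [G]
    have hG1 : G1 (1:ℝ) x = Real.log x := by simp [G1]
    rw [hGeq, hG1]
    have h1 : HasDerivAt (fun y : ℝ => y * Real.log y) (1 * Real.log x + x * x⁻¹) x :=
      (hasDerivAt_id' (x := x)).mul (Real.hasDerivAt_log hx.ne')
    have h := (h1.sub (hasDerivAt_id' (x := x))).add_const 1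
    have : Real.log x = 1 * Real.log x + x * x⁻¹ - 1 := by field_simp; ring
    rw [this]; exact h
  · have hGeq : G s = fun y : ℝ => (y ^ s - 1 - s * (y - 1)) / (s * (s - 1)) := by
      funext y; simp [G, hs0, hs1]
    have hG1 : G1 s x = (x ^ (s - 1) - 1) / (s - 1) := by simp [G1, hs0, hs1]
    rw [hGeq, hG1]
    have hp : HasDerivAt (fun y : ℝ => y ^ s) (s * x ^ (s - 1)) x :=
      Real.hasDerivAt_rpow_const (Or.inl hx.ne')
    have h := ((hp.sub_const 1).sub
      (((hasDerivAt_id' (x := x)).sub_const 1).const_mul s)).div_const (s * (s - 1))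
    have hs1' : s - 1 ≠ 0 := sub_ne_zero.mpr hs1
    have : (x ^ (s - 1) - 1) / (s - 1) = (s * x ^ (s - 1) - s * 1) / (s * (s - 1)) := by
      field_simp
    rw [this]; exact h

lemma hasDerivAt_G1 {s x : ℝ} (hx : 0 < x) : HasDerivAt (G1 s) (x ^ (s - 2)) x := by
  rcases eq_or_ne s 0 with rfl | hs0
  · have hGeq : G1 (0:ℝ) = fun y : ℝ => 1 - y⁻¹ := by funext y; simp [G1]
    rw [hGeq]
    have h := (hasDerivAt_inv hx.ne').const_sub 1
    have : x ^ ((0:ℝ) - 2) = -(-(x ^ 2)⁻¹) := by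
      rw [show (0:ℝ) - 2 = -2 by norm_num, Real.rpow_neg hx.le,
        show (2:ℝ) = ((2:ℕ):ℝ) by norm_num, Real.rpow_natCast]
      ring
    rw [this]; exact h
  rcases eq_or_ne s 1 with rfl | hs1
  · have hGeq : G1 (1:ℝ) = fun y : ℝ => Real.log y := by funext y; simp [G1]
    rw [hGeq, show (1:ℝ) - 2 = -1 by norm_num, Real.rpow_neg_one]
    exact Real.hasDerivAt_log hx.ne'
  · have hGeq : G1 s = fun y : ℝ => (y ^ (s - 1) - 1) / (s - 1) := by
      funext y; simp [G1, hs0, hs1]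
    rw [hGeq]
    have hp : HasDerivAt (fun y : ℝ => y ^ (s - 1)) ((s - 1) * x ^ (s - 1 - 1)) x :=
      Real.hasDerivAt_rpow_const (Or.inl hx.ne')
    have h := (hp.sub_const 1).div_const (s - 1)
    have hs1' : s - 1 ≠ 0 := sub_ne_zero.mpr hs1
    have : x ^ (s - 2) = (s - 1) * x ^ (s - 1 - 1) / (s - 1) := by
      rw [show s - 1 - 1 = s - 2 by ring]; field_simp
    rw [this]; exact h

lemma FI_one : FI 1 = 0 := by
  rw [FI, show (1:ℝ) + 1 = 2 by norm_num]; simp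
lemma FI'_one : FI' 1 = 0 := by
  rw [FI', show (1:ℝ) + 1 = 2 by norm_num]; simp
lemma G_one (s : ℝ) : G s 1 = 0 := by
  rcases eq_or_ne s 0 with rfl | hs0
  · simp [G]
  rcases eq_or_ne s 1 with rfl | hs1
  · simp [G, hs0]
  · simp [G, hs0, hs1]
lemma G1_one (s : ℝ) : G1 s 1 = 0 := by
  rcases eq_or_ne s 0 with rfl | hs0
  · simp [G1]
  rcases eq_or_ne s 1 with rfl | hs1
  · simp [G1, hs0]
  · simp [G1, hs0, hs1]

lemma conv_nonneg (f f' f'' : ℝ → ℝ) {r R : ℝ} (hr1 : r ≤ 1) (h1R : 1 ≤ R)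
    (hd : ∀ x ∈ Set.Icc r R, HasDerivAt f (f' x) x)
    (hd' : ∀ x ∈ Set.Icc r R, HasDerivAt f' (f'' x) x)
    (h2 : ∀ x ∈ Set.Icc r R, 0 ≤ f'' x)
    (h1 : f 1 = 0) (h1' : f' 1 = 0) :
    ∀ x ∈ Set.Icc r R, 0 ≤ f x := by
  have h1mem : (1:ℝ) ∈ Set.Icc r R := ⟨hr1, h1R⟩
  have hmono : MonotoneOn f' (Set.Icc r R) := by
    apply monotoneOn_of_deriv_nonneg (convex_Icc r R)
    · exact fun x hx => (hd' x hx).continuousAt.continuousWithinAt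
    · exact fun x hx =>
        (hd' x (interior_subset hx)).differentiableAt.differentiableWithinAt
    · intro x hx
      rw [(hd' x (interior_subset hx)).deriv]
      exact h2 x (interior_subset hx)
  intro x hx
  rcases le_total x 1 with hx1 | hx1
  · have hsub : Set.Icc x 1 ⊆ Set.Icc r R := Set.Icc_subset_Icc hx.1 h1R
    have hanti : AntitoneOn f (Set.Icc x 1) := by
      apply antitoneOn_of_deriv_nonpos (convex_Icc x 1)
      · exact fun y hy => (hd y (hsub hy)).continuousAt.continuousWithinAt
      · exact fun y hy =>
          (hd y (hsub (interior_subset hy))).differentiableAt.differentiableWithinAt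
      · intro y hy
        rw [(hd y (hsub (interior_subset hy))).deriv]
        have h := hmono (hsub (interior_subset hy)) h1mem (interior_subset hy).2
        rw [h1'] at h; exact h
    have h := hanti (Set.left_mem_Icc.2 hx1) (Set.right_mem_Icc.2 hx1) hx1
    rw [h1] at h; exact h
  · have hsub : Set.Icc 1 x ⊆ Set.Icc r R := Set.Icc_subset_Icc hr1 hx.2
    have hmo : MonotoneOn f (Set.Icc 1 x) := by
      apply monotoneOn_of_deriv_nonneg (convex_Icc 1 x)
      · exact fun y hy => (hd y (hsub hy)).continuousAt.continuousWithinAt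
      · exact fun y hy =>
          (hd y (hsub (interior_subset hy))).differentiableAt.differentiableWithinAt
      · intro y hy
        rw [(hd y (hsub (interior_subset hy))).deriv]
        have h := hmono h1mem (hsub (interior_subset hy)) (interior_subset hy).1
        rw [h1'] at h; exact h
    have h := hmo (Set.left_mem_Icc.2 hx1) (Set.right_mem_Icc.2 hx1) hx1
    rw [h1] at h; exact h
lemma ptwise_le (s c : ℝ) {r R : ℝ} (hr : 0 < r) (hr1 : r ≤ 1) (h1R : 1 ≤ R)
    (hc : ∀ t ∈ Set.Icc r R, c * t ^ (s - 2) ≤ FI2 t) :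
    ∀ x ∈ Set.Icc r R, c * G s x ≤ FI x := by
  have hpos : ∀ t ∈ Set.Icc r R, (0:ℝ) < t := fun t ht => lt_of_lt_of_le hr ht.1
  have key := conv_nonneg (fun x => FI x - c * G s x) (fun x => FI' x - c * G1 s x)
    (fun x => FI2 x - c * x ^ (s - 2)) hr1 h1R
    (fun x hx => (hasDerivAt_FI (hpos x hx)).sub
      (HasDerivAt.const_mul c (hasDerivAt_G (hpos x hx))))
    (fun x hx => (hasDerivAt_FI' (hpos x hx)).sub
      (HasDerivAt.const_mul c (hasDerivAt_G1 (hpos x hx))))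
    (fun x hx => sub_nonneg.2 (hc x hx))
    (by show FI 1 - c * G s 1 = 0; rw [FI_one, G_one]; ring)
    (by show FI' 1 - c * G1 s 1 = 0; rw [FI'_one, G1_one]; ring)
  intro x hx
  linarith [show (0:ℝ) ≤ FI x - c * G s x from key x hx]

lemma ptwise_ge (s c : ℝ) {r R : ℝ} (hr : 0 < r) (hr1 : r ≤ 1) (h1R : 1 ≤ R)
    (hc : ∀ t ∈ Set.Icc r R, FI2 t ≤ c * t ^ (s - 2)) :
    ∀ x ∈ Set.Icc r R, FI x ≤ c * G s x := by
  have hpos : ∀ t ∈ Set.Icc r R, (0:ℝ) < t := fun t ht => lt_of_lt_of_le hr ht.1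
  have key := conv_nonneg (fun x => c * G s x - FI x) (fun x => c * G1 s x - FI' x)
    (fun x => c * x ^ (s - 2) - FI2 x) hr1 h1R
    (fun x hx => (HasDerivAt.const_mul c (hasDerivAt_G (hpos x hx))).sub
      (hasDerivAt_FI (hpos x hx)))
    (fun x hx => (HasDerivAt.const_mul c (hasDerivAt_G1 (hpos x hx))).sub
      (hasDerivAt_FI' (hpos x hx)))
    (fun x hx => sub_nonneg.2 (hc x hx))
    (by show c * G s 1 - FI 1 = 0; rw [FI_one, G_one]; ring)
    (by show c * G1 s 1 - FI' 1 = 0; rw [FI'_one, G1_one]; ring)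
  intro x hx
  linarith [show (0:ℝ) ≤ c * G s x - FI x from key x hx]

lemma key_mono (s : ℝ) {u v : ℝ} (hu : 0 < u) (huv : u ≤ v) (hs : s ≤ 0) :
    u ^ (1 - s) * (1 + v) ≤ v ^ (1 - s) * (1 + u) := by
  have hv : 0 < v := lt_of_lt_of_le hu huv
  have h1 : u ^ (1 - s) ≤ v ^ (1 - s) := Real.rpow_le_rpow hu.le huv (by linarith)
  have h2 : u ^ (-s) ≤ v ^ (-s) := Real.rpow_le_rpow hu.le huv (by linarith)
  have eu : u ^ (1 - s) = u * u ^ (-s) := by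
    rw [sub_eq_add_neg, Real.rpow_add hu, Real.rpow_one]
  have ev : v ^ (1 - s) = v * v ^ (-s) := by
    rw [sub_eq_add_neg, Real.rpow_add hv, Real.rpow_one]
  have h3 : u * v * u ^ (-s) ≤ u * v * v ^ (-s) :=
    mul_le_mul_of_nonneg_left h2 (by positivity)
  rw [eu, ev] at h1 ⊢
  nlinarith [h1, h3]

lemma key_anti (s : ℝ) {u v : ℝ} (hu : 0 < u) (huv : u ≤ v) (hs : 1 ≤ s) :
    v ^ (1 - s) * (1 + u) ≤ u ^ (1 - s) * (1 + v) := by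
  have hv : 0 < v := lt_of_lt_of_le hu huv
  have h1 : v ^ (1 - s) ≤ u ^ (1 - s) := Real.rpow_le_rpow_of_nonpos hu huv (by linarith)
  have h2 : v ^ (-s) ≤ u ^ (-s) := Real.rpow_le_rpow_of_nonpos hu huv (by linarith)
  have eu : u ^ (1 - s) = u * u ^ (-s) := by
    rw [sub_eq_add_neg, Real.rpow_add hu, Real.rpow_one]
  have ev : v ^ (1 - s) = v * v ^ (-s) := by
    rw [sub_eq_add_neg, Real.rpow_add hv, Real.rpow_one]
  have h3 : u * v * v ^ (-s) ≤ u * v * u ^ (-s) :=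
    mul_le_mul_of_nonneg_left h2 (by positivity)
  rw [eu, ev] at h1 ⊢
  nlinarith [h1, h3]

lemma hc_le (s a : ℝ) (ha : 0 < a) {t : ℝ} (ht : 0 < t)
    (key : a ^ (1 - s) * (1 + t) ≤ t ^ (1 - s) * (1 + a)) :
    a ^ (1 - s) / (2 * (1 + a)) * t ^ (s - 2) ≤ FI2 t := by
  have hB : (0:ℝ) < t ^ (s - 2) := Real.rpow_pos_of_pos ht _
  have hA : (0:ℝ) < a ^ (1 - s) := Real.rpow_pos_of_pos ha _
  have h3 : t ^ (s - 2) * t ^ (1 - s) * t = 1 := by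
    rw [← Real.rpow_add ht, show s - 2 + (1 - s) = -1 by ring, Real.rpow_neg_one]
    field_simp
  have hFI : FI2 t = 1 / (2 * t * (1 + t)) := by rw [FI2]; field_simp; ring
  rw [hFI, div_mul_eq_mul_div, div_le_div_iff₀ (by positivity) (by positivity)]
  have h4 : t ^ (s - 2) * t * (a ^ (1 - s) * (1 + t)) ≤
      t ^ (s - 2) * t * (t ^ (1 - s) * (1 + a)) :=
    mul_le_mul_of_nonneg_left key (by positivity)
  have h5 : t ^ (s - 2) * t * (t ^ (1 - s) * (1 + a)) = 1 + a := by
    linear_combination (1 + a) * h3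
  nlinarith [h4.trans_eq h5]

lemma hc_ge (s a : ℝ) (ha : 0 < a) {t : ℝ} (ht : 0 < t)
    (key : t ^ (1 - s) * (1 + a) ≤ a ^ (1 - s) * (1 + t)) :
    FI2 t ≤ a ^ (1 - s) / (2 * (1 + a)) * t ^ (s - 2) := by
  have hB : (0:ℝ) < t ^ (s - 2) := Real.rpow_pos_of_pos ht _
  have hA : (0:ℝ) < a ^ (1 - s) := Real.rpow_pos_of_pos ha _
  have h3 : t ^ (s - 2) * t ^ (1 - s) * t = 1 := by
    rw [← Real.rpow_add ht, show s - 2 + (1 - s) = -1 by ring, Real.rpow_neg_one]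
    field_simp
  have hFI : FI2 t = 1 / (2 * t * (1 + t)) := by rw [FI2]; field_simp; ring
  rw [hFI, div_mul_eq_mul_div, div_le_div_iff₀ (by positivity) (by positivity)]
  have h4 : t ^ (s - 2) * t * (t ^ (1 - s) * (1 + a)) ≤
      t ^ (s - 2) * t * (a ^ (1 - s) * (1 + t)) :=
    mul_le_mul_of_nonneg_left key (by positivity)
  have h5 : t ^ (s - 2) * t * (t ^ (1 - s) * (1 + a)) = 1 + a := by
    linear_combination (1 + a) * h3
  nlinarith [h5.symm.trans_le h4]
lemma sumFI {n : ℕ} (p q : Fin n → ℝ) (hp : ∀ i, 0 < p i) (hq : ∀ i, 0 < q i) :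
    ∑ i, q i * FI (p i / q i) = JSdiv p q := by
  rw [JSdiv, relJS, relJS, ← Finset.sum_add_distrib, Finset.sum_div]
  apply Finset.sum_congr rfl
  intro i _
  have hpi := hp i; have hqi := hq i
  have hpq : (0:ℝ) < p i + q i := by linarith
  have l1 : Real.log (p i / q i) = Real.log (p i) - Real.log (q i) :=
    Real.log_div hpi.ne' hqi.ne'
  have l2 : Real.log (1 + p i / q i) = Real.log (p i + q i) - Real.log (q i) := by
    rw [show 1 + p i / q i = (p i + q i) / q i by rw [add_div, div_self hqi.ne']; ring,
      Real.log_div hpq.ne' hqi.ne']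
  have l3 : Real.log (2 * p i / (p i + q i)) =
      Real.log 2 + Real.log (p i) - Real.log (p i + q i) := by
    rw [Real.log_div (by positivity : (0:ℝ) < 2 * p i).ne' hpq.ne',
      Real.log_mul two_ne_zero hpi.ne']
  have l4 : Real.log (2 * q i / (q i + p i)) =
      Real.log 2 + Real.log (q i) - Real.log (p i + q i) := by
    rw [add_comm (q i) (p i), Real.log_div (by positivity : (0:ℝ) < 2 * q i).ne' hpq.ne',
      Real.log_mul two_ne_zero hqi.ne']
  rw [FI, l1, l2, l3, l4]
  field_simp
  ring

lemma sumG {n : ℕ} (s : ℝ) (p q : Fin n → ℝ) (hp : ∀ i, 0 < p i) (hq : ∀ i, 0 < q i)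
    (hp1 : ∑ i, p i = 1) (hq1 : ∑ i, q i = 1) :
    ∑ i, q i * G s (p i / q i) = Phi s p q := by
  rcases eq_or_ne s 0 with rfl | hs0
  · rw [Phi, if_pos rfl]
    have key : ∀ i ∈ Finset.univ, q i * G 0 (p i / q i) =
        p i - q i + q i * Real.log (q i / p i) := by
      intro i _
      rw [show G 0 (p i / q i) = p i / q i - 1 - Real.log (p i / q i) by simp [G],
        Real.log_div (hp i).ne' (hq i).ne', Real.log_div (hq i).ne' (hp i).ne']
      field_simp [(hq i).ne']
      ring
    rw [Finset.sum_congr rfl key, Finset.sum_add_distrib, Finset.sum_sub_distrib, hp1, hq1]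
    ring
  rcases eq_or_ne s 1 with rfl | hs1
  · rw [Phi, if_neg one_ne_zero, if_pos rfl]
    have key : ∀ i ∈ Finset.univ, q i * G 1 (p i / q i) =
        p i * Real.log (p i / q i) - (p i - q i) := by
      intro i _
      rw [show G 1 (p i / q i) =
          (p i / q i) * Real.log (p i / q i) - p i / q i + 1 by simp [G]]
      field_simp [(hq i).ne']
      ring
    rw [Finset.sum_congr rfl key, Finset.sum_sub_distrib, Finset.sum_sub_distrib, hp1, hq1]
    ring
  · rw [Phi, if_neg hs0, if_neg hs1]
    have key : ∀ i ∈ Finset.univ, q i * G s (p i / q i) =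
        (s * (s - 1))⁻¹ * (p i ^ s * q i ^ (1 - s)) - (s * (s - 1))⁻¹ * q i -
          ((s * (s - 1))⁻¹ * s) * (p i - q i) := by
      intro i _
      rw [show G s (p i / q i) =
          ((p i / q i) ^ s - 1 - s * (p i / q i - 1)) / (s * (s - 1)) by simp [G, hs0, hs1]]
      have e1 : (p i / q i) ^ s = p i ^ s / q i ^ s := Real.div_rpow (hp i).le (hq i).le s
      have e2 : q i ^ (1 - s) = q i / q i ^ s := by
        rw [Real.rpow_sub (hq i), Real.rpow_one]
      have hqs : (0:ℝ) < q i ^ s := Real.rpow_pos_of_pos (hq i) s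
      have hs1' : s - 1 ≠ 0 := sub_ne_zero.mpr hs1
      rw [e1, e2]
      field_simp [(hq i).ne']
    rw [Finset.sum_congr rfl key, Finset.sum_sub_distrib, Finset.sum_sub_distrib,
      ← Finset.mul_sum, ← Finset.mul_sum, ← Finset.mul_sum, Finset.sum_sub_distrib,
      hp1, hq1]
    ring

lemma r_le_one {n : ℕ} (hn : 2 ≤ n) (p q : Fin n → ℝ) (hq : ∀ i, 0 < q i)
    (hp1 : ∑ i, p i = 1) (hq1 : ∑ i, q i = 1) {r : ℝ} (hlow : ∀ i, r ≤ p i / q i) :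
    r ≤ 1 := by
  by_contra h
  push_neg at h
  have hlt : ∀ i ∈ Finset.univ, q i < p i := by
    intro i _
    have h1 := hlow i
    have hqi := hq i
    rw [le_div_iff₀ hqi] at h1
    nlinarith
  have : Nonempty (Fin n) := ⟨⟨0, by omega⟩⟩
  have := Finset.sum_lt_sum_of_nonempty Finset.univ_nonempty hlt
  rw [hp1, hq1] at this
  exact lt_irrefl 1 this

lemma one_le_R {n : ℕ} (hn : 2 ≤ n) (p q : Fin n → ℝ) (hq : ∀ i, 0 < q i)
    (hp1 : ∑ i, p i = 1) (hq1 : ∑ i, q i = 1) {R : ℝ} (hupp : ∀ i, p i / q i ≤ R) :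
    1 ≤ R := by
  by_contra h
  push_neg at h
  have hlt : ∀ i ∈ Finset.univ, p i < q i := by
    intro i _
    have h1 := hupp i
    have hqi := hq i
    rw [div_le_iff₀ hqi] at h1
    nlinarith
  have : Nonempty (Fin n) := ⟨⟨0, by omega⟩⟩
  have := Finset.sum_lt_sum_of_nonempty Finset.univ_nonempty hlt
  rw [hp1, hq1] at this
  exact lt_irrefl 1 this

lemma bound_le {n : ℕ} (p q : Fin n → ℝ) (hp : ∀ i, 0 < p i) (hq : ∀ i, 0 < q i)
    (hp1 : ∑ i, p i = 1) (hq1 : ∑ i, q i = 1) {r R : ℝ} (s c : ℝ) (hr : 0 < r)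
    (hr1 : r ≤ 1) (h1R : 1 ≤ R) (hlow : ∀ i, r ≤ p i / q i) (hupp : ∀ i, p i / q i ≤ R)
    (hc : ∀ t ∈ Set.Icc r R, c * t ^ (s - 2) ≤ FI2 t) :
    c * Phi s p q ≤ JSdiv p q := by
  rw [← sumFI p q hp hq, ← sumG s p q hp hq hp1 hq1, Finset.mul_sum]
  apply Finset.sum_le_sum
  intro i _
  have hmem : p i / q i ∈ Set.Icc r R := ⟨hlow i, hupp i⟩
  have h := ptwise_le s c hr hr1 h1R hc (p i / q i) hmem
  calc c * (q i * G s (p i / q i)) = q i * (c * G s (p i / q i)) := by ring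
    _ ≤ q i * FI (p i / q i) := mul_le_mul_of_nonneg_left h (hq i).le

lemma bound_ge {n : ℕ} (p q : Fin n → ℝ) (hp : ∀ i, 0 < p i) (hq : ∀ i, 0 < q i)
    (hp1 : ∑ i, p i = 1) (hq1 : ∑ i, q i = 1) {r R : ℝ} (s c : ℝ) (hr : 0 < r)
    (hr1 : r ≤ 1) (h1R : 1 ≤ R) (hlow : ∀ i, r ≤ p i / q i) (hupp : ∀ i, p i / q i ≤ R)
    (hc : ∀ t ∈ Set.Icc r R, FI2 t ≤ c * t ^ (s - 2)) :
    JSdiv p q ≤ c * Phi s p q := by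
  rw [← sumFI p q hp hq, ← sumG s p q hp hq hp1 hq1, Finset.mul_sum]
  apply Finset.sum_le_sum
  intro i _
  have hmem : p i / q i ∈ Set.Icc r R := ⟨hlow i, hupp i⟩
  have h := ptwise_ge s c hr hr1 h1R hc (p i / q i) hmem
  calc q i * FI (p i / q i) ≤ q i * (c * G s (p i / q i)) :=
        mul_le_mul_of_nonneg_left h (hq i).le
    _ = c * (q i * G s (p i / q i)) := by ring
theorem stmt14 {n : ℕ} (hn : 2 ≤ n) (p q : Fin n → ℝ)
    (hp : ∀ i, 0 < p i) (hq : ∀ i, 0 < q i)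
    (hp1 : ∑ i, p i = 1) (hq1 : ∑ i, q i = 1)
    (r R : ℝ) (hr : 0 < r)
    (hlow : ∀ i, r ≤ p i / q i) (hupp : ∀ i, p i / q i ≤ R) (s : ℝ) :
    (s ≤ 0 →
      (r ^ (1 - s) / (2 * (1 + r))) * Phi s p q ≤ JSdiv p q ∧
        JSdiv p q ≤ (R ^ (1 - s) / (2 * (1 + R))) * Phi s p q) ∧
    (1 ≤ s →
      (R ^ (1 - s) / (2 * (1 + R))) * Phi s p q ≤ JSdiv p q ∧
        JSdiv p q ≤ (r ^ (1 - s) / (2 * (1 + r))) * Phi s p q) := by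
  have hr1 : r ≤ 1 := r_le_one hn p q hq hp1 hq1 hlow
  have h1R : 1 ≤ R := one_le_R hn p q hq hp1 hq1 hupp
  have hR : 0 < R := lt_of_lt_of_le one_pos h1R
  constructor
  · intro hs
    refine ⟨bound_le p q hp hq hp1 hq1 s _ hr hr1 h1R hlow hupp ?_,
      bound_ge p q hp hq hp1 hq1 s _ hr hr1 h1R hlow hupp ?_⟩
    · intro t ht
      have ht0 : 0 < t := lt_of_lt_of_le hr ht.1
      exact hc_le s r hr ht0 (key_mono s hr ht.1 hs)
    · intro t ht
      have ht0 : 0 < t := lt_of_lt_of_le hr ht.1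
      exact hc_ge s R hR ht0 (key_mono s ht0 ht.2 hs)
  · intro hs
    refine ⟨bound_le p q hp hq hp1 hq1 s _ hr hr1 h1R hlow hupp ?_,
      bound_ge p q hp hq hp1 hq1 s _ hr hr1 h1R hlow hupp ?_⟩
    · intro t ht
      have ht0 : 0 < t := lt_of_lt_of_le hr ht.1
      exact hc_le s R hR ht0 (key_anti s ht0 ht.2 hs)
    · intro t ht
      have ht0 : 0 < t := lt_of_lt_of_le hr ht.1
      exact hc_ge s r hr ht0 (key_anti s hr ht.1 hs)
end

section
/- For all P, Q ∈ Γ_n, I(P||Q) ≤ h(P||Q). -/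
open Real

noncomputable def myL (u : ℝ) : ℝ := Real.log 2 + 2 * Real.log u - Real.log (u^2 + 1)
noncomputable def myPhi (u : ℝ) : ℝ := u * myL u - u + 1
noncomputable def myG (u : ℝ) : ℝ := u^2 * myL u + (Real.log 2 - Real.log (u^2+1)) - (u-1)^2

lemma myL_eq (u : ℝ) (hu : 0 < u) : myL u = Real.log (2*u^2/(u^2+1)) := by
  rw [Real.log_div (by positivity) (by positivity),
    Real.log_mul (by norm_num) (by positivity), Real.log_pow]
  unfold myL; push_cast; ring

lemma hasDerivAt_sq1 (u : ℝ) : HasDerivAt (fun u : ℝ => u^2 + 1) (2*u) u := by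
  simpa using ((hasDerivAt_pow 2 u).add_const 1)

lemma hasDerivAt_myL (u : ℝ) (hu : 0 < u) :
    HasDerivAt myL (2/u - 2*u/(u^2+1)) u := by
  have h3 : HasDerivAt (fun u : ℝ => Real.log (u^2+1)) (2*u/(u^2+1)) u := by
    have := (Real.hasDerivAt_log (x := u^2+1) (by positivity)).comp u (hasDerivAt_sq1 u)
    exact this.congr_deriv (by ring)
  have h2 : HasDerivAt (fun u : ℝ => Real.log 2 + 2 * Real.log u) (2/u) u := by
    have := ((Real.hasDerivAt_log hu.ne').const_mul 2).const_add (Real.log 2)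
    exact this.congr_deriv (by ring)
  exact h2.sub h3

lemma hasDerivAt_myPhi (u : ℝ) (hu : 0 < u) :
    HasDerivAt myPhi (myL u + (1 - u^2)/(u^2+1)) u := by
  have h := ((hasDerivAt_id u).mul (hasDerivAt_myL u hu)).sub (hasDerivAt_id u)
  have h2 := h.add_const 1
  refine HasDerivAt.congr_deriv (f := myPhi) h2 ?_
  have h1 : u^2 + 1 ≠ 0 := by positivity
  simp only [id]
  field_simp
  ring

lemma hasDerivAt_myG (u : ℝ) (hu : 0 < u) :
    HasDerivAt myG (2 * myPhi u) u := by
  have h3 : HasDerivAt (fun u : ℝ => Real.log (u^2+1)) (2*u/(u^2+1)) u := by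
    have := (Real.hasDerivAt_log (x := u^2+1) (by positivity)).comp u (hasDerivAt_sq1 u)
    exact this.congr_deriv (by ring)
  have h := (((hasDerivAt_pow 2 u).mul (hasDerivAt_myL u hu)).add
      ((h3.const_sub (Real.log 2)))).sub
      (((hasDerivAt_id u).sub_const 1).pow 2)
  refine HasDerivAt.congr_deriv (f := myG) h ?_
  have h1 : u^2 + 1 ≠ 0 := by positivity
  unfold myPhi myL
  simp only [id]
  field_simp
  ring

lemma myPhi_deriv_nonpos (u : ℝ) (hu : 0 < u) : myL u + (1 - u^2)/(u^2+1) ≤ 0 := by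
  have h1 : (0:ℝ) < 2*u^2/(u^2+1) := by positivity
  have h2 := Real.log_le_sub_one_of_pos h1
  rw [myL_eq u hu]
  have h3 : 2*u^2/(u^2+1) - 1 = (u^2-1)/(u^2+1) := by
    field_simp; ring
  rw [h3] at h2
  have : (u^2-1)/(u^2+1) + (1 - u^2)/(u^2+1) = 0 := by ring
  linarith

lemma myPhi_one : myPhi 1 = 0 := by
  unfold myPhi myL; norm_num

lemma myG_one : myG 1 = 0 := by
  unfold myG myL; norm_num

lemma myPhi_anti : AntitoneOn myPhi (Set.Ioi 0) := by
  have hd : ∀ x ∈ interior (Set.Ioi (0:ℝ)), deriv myPhi x ≤ 0 := by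
    intro x hx
    rw [interior_Ioi] at hx
    rw [(hasDerivAt_myPhi x hx).deriv]
    exact myPhi_deriv_nonpos x hx
  exact antitoneOn_of_deriv_nonpos (convex_Ioi 0)
    (fun x hx => ((hasDerivAt_myPhi x hx).differentiableAt.continuousAt.continuousWithinAt))
    (by rw [interior_Ioi]; exact fun x hx => (hasDerivAt_myPhi x hx).differentiableAt.differentiableWithinAt)
    hd

lemma myG_nonpos (u : ℝ) (hu : 0 < u) : myG u ≤ 0 := by
  rcases le_total u 1 with h | h
  · -- monotone on Ioc 0 1
    have hmono : MonotoneOn myG (Set.Ioc 0 1) := by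
      apply monotoneOn_of_deriv_nonneg (convex_Ioc 0 1)
      · exact fun x hx => ((hasDerivAt_myG x hx.1).differentiableAt.continuousAt.continuousWithinAt)
      · intro x hx
        rw [interior_Ioc] at hx
        exact (hasDerivAt_myG x hx.1).differentiableAt.differentiableWithinAt
      · intro x hx
        rw [interior_Ioc] at hx
        rw [(hasDerivAt_myG x hx.1).deriv]
        have := myPhi_anti (Set.mem_Ioi.mpr hx.1) (Set.mem_Ioi.mpr one_pos) (le_of_lt hx.2)
        rw [myPhi_one] at this
        linarith
    have := hmono (Set.mem_Ioc.mpr ⟨hu, h⟩) (Set.mem_Ioc.mpr ⟨one_pos, le_refl 1⟩) h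
    rw [myG_one] at this
    exact this
  · have hanti : AntitoneOn myG (Set.Ici 1) := by
      apply antitoneOn_of_deriv_nonpos (convex_Ici 1)
      · exact fun x hx => ((hasDerivAt_myG x (lt_of_lt_of_le one_pos hx)).differentiableAt.continuousAt.continuousWithinAt)
      · intro x hx
        rw [interior_Ici] at hx
        exact (hasDerivAt_myG x (lt_trans one_pos hx)).differentiableAt.differentiableWithinAt
      · intro x hx
        rw [interior_Ici] at hx
        rw [(hasDerivAt_myG x (lt_trans one_pos hx)).deriv]
        have := myPhi_anti (Set.mem_Ioi.mpr one_pos) (Set.mem_Ioi.mpr (lt_trans one_pos hx)) (le_of_lt hx)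
        rw [myPhi_one] at this
        linarith
    have := hanti (Set.mem_Ici.mpr (le_refl 1)) (Set.mem_Ici.mpr h) h
    rw [myG_one] at this
    exact this

lemma pointwise_ineq (a b : ℝ) (ha : 0 < a) (hb : 0 < b) :
    a * Real.log (2*a/(a+b)) + b * Real.log (2*b/(a+b)) ≤ (Real.sqrt a - Real.sqrt b)^2 := by
  set u := Real.sqrt (a/b) with hu_def
  have hub : 0 < u := Real.sqrt_pos.mpr (by positivity)
  have hu2 : u^2 = a/b := Real.sq_sqrt (by positivity)
  have hG := myG_nonpos u hub
  have hlogu : Real.log u = (Real.log a - Real.log b) / 2 := by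
    rw [hu_def, Real.log_sqrt (by positivity), Real.log_div ha.ne' hb.ne']
  have e1 : Real.log (2*a/(a+b)) = Real.log 2 + Real.log a - Real.log (a+b) := by
    rw [Real.log_div (by positivity) (by positivity), Real.log_mul (by norm_num) ha.ne']
  have e2 : Real.log (2*b/(a+b)) = Real.log 2 + Real.log b - Real.log (a+b) := by
    rw [Real.log_div (by positivity) (by positivity), Real.log_mul (by norm_num) hb.ne']
  have e3 : Real.log (u^2+1) = Real.log (a+b) - Real.log b := by
    rw [hu2]
    rw [show a/b + 1 = (a+b)/b by field_simp]
    rw [Real.log_div (by positivity) hb.ne']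
  have hsq : b * (u - 1)^2 = (Real.sqrt a - Real.sqrt b)^2 := by
    have h1 : u = Real.sqrt a / Real.sqrt b := by
      rw [hu_def, Real.sqrt_div ha.le]
    have hb' : Real.sqrt b ≠ 0 := by positivity
    have hbb : Real.sqrt b ^ 2 = b := Real.sq_sqrt hb.le
    rw [h1]
    rw [show Real.sqrt a / Real.sqrt b - 1 = (Real.sqrt a - Real.sqrt b) / Real.sqrt b by field_simp]
    rw [div_pow, ← hbb]
    field_simp
    rw [Real.sqrt_sq (Real.sqrt_nonneg b)]
  have expand : b * myG u = a*(Real.log 2 + Real.log a - Real.log (a+b))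
      + b*(Real.log 2 + Real.log b - Real.log (a+b)) - b*(u-1)^2 := by
    unfold myG myL
    rw [e3, hlogu, hu2]
    field_simp
    ring
  have key : b * myG u = a * Real.log (2*a/(a+b)) + b * Real.log (2*b/(a+b))
      - (Real.sqrt a - Real.sqrt b)^2 := by
    rw [expand, hsq, e1, e2]
  nlinarith [mul_nonpos_of_nonneg_of_nonpos hb.le hG]

theorem stmt15 {n : ℕ} (hn : 2 ≤ n) (p q : Fin n → ℝ)
    (hp : ∀ i, 0 < p i) (hq : ∀ i, 0 < q i)
    (hp1 : ∑ i, p i = 1) (hq1 : ∑ i, q i = 1) :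
    JSdiv p q ≤ hell p q := by
  unfold JSdiv relJS hell
  rw [← Finset.sum_add_distrib]
  rw [div_le_iff₀ (by norm_num : (0:ℝ) < 2)]
  rw [mul_comm, ← mul_assoc]
  norm_num
  apply Finset.sum_le_sum
  intro i _
  have := pointwise_ineq (p i) (q i) (hp i) (hq i)
  rw [add_comm (q i) (p i)]
  linarith
end

section
/- For all P, Q ∈ Γ_n, the following three inequalities hold: ((√2 − 1)/2)·K(Q||P) ≤ T(P||Q), ((√2 − 1)/2)·K(P||Q) ≤ T(P||Q), and h(P||Q) ≤ T(P||Q). -/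
open Real

noncomputable def cAG : ℝ := (Real.sqrt 2 - 1) / 2

noncomputable def gfun (x : ℝ) : ℝ :=
  ((x + 1) / 2) * Real.log ((x + 1) / 2) - ((x + 1) / 4 - cAG) * Real.log x - cAG * (x - 1)

noncomputable def g1 (x : ℝ) : ℝ :=
  (1 / 2) * Real.log ((x + 1) / 2) + 1 / 2 - (1 / 4) * Real.log x - ((x + 1) / 4 - cAG) / x - cAG

noncomputable def g2 (x : ℝ) : ℝ :=
  1 / (2 * (x + 1)) - 1 / (4 * x) + 1 / (4 * x ^ 2) - cAG / x ^ 2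

lemma sqrt2_lt : Real.sqrt 2 < 3/2 := by
  nlinarith [Real.sq_sqrt (by norm_num : (2:ℝ) ≥ 0), Real.sqrt_nonneg 2]

lemma one_lt_sqrt2 : 1 < Real.sqrt 2 := by
  nlinarith [Real.sq_sqrt (by norm_num : (2:ℝ) ≥ 0), Real.sqrt_nonneg 2]

lemma cAG_pos : 0 < cAG := by
  have := one_lt_sqrt2; unfold cAG; linarith

lemma hasDerivAt_gfun {x : ℝ} (hx : 0 < x) : HasDerivAt gfun (g1 x) x := by
  have h1 : (0:ℝ) < (x + 1) / 2 := by linarith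
  have hd1 : HasDerivAt (fun x : ℝ => (x + 1) / 2) (1 / 2) x := by
    simpa using ((hasDerivAt_id x).add_const 1).div_const 2
  have hlog1 : HasDerivAt (fun x : ℝ => Real.log ((x + 1) / 2)) ((1/2) / ((x+1)/2)) x :=
    hd1.log (ne_of_gt h1)
  have hlog2 : HasDerivAt Real.log x⁻¹ x := Real.hasDerivAt_log (ne_of_gt hx)
  have hA : HasDerivAt (fun x : ℝ => ((x + 1) / 2) * Real.log ((x + 1) / 2))
      ((1/2) * Real.log ((x+1)/2) + ((x+1)/2) * ((1/2) / ((x+1)/2))) x := hd1.mul hlog1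
  have hd2 : HasDerivAt (fun x : ℝ => (x + 1) / 4 - cAG) (1 / 4) x := by
    simpa using (((hasDerivAt_id x).add_const 1).div_const 4).sub_const cAG
  have hB : HasDerivAt (fun x : ℝ => ((x + 1) / 4 - cAG) * Real.log x)
      ((1/4) * Real.log x + ((x+1)/4 - cAG) * x⁻¹) x := hd2.mul hlog2
  have hC : HasDerivAt (fun x : ℝ => cAG * (x - 1)) cAG x := by
    simpa using ((hasDerivAt_id x).sub_const 1).const_mul cAG
  have := (hA.sub hB).sub hC
  refine this.congr_deriv ?_
  unfold g1
  field_simp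
  ring

lemma hasDerivAt_g1 {x : ℝ} (hx : 0 < x) : HasDerivAt g1 (g2 x) x := by
  have h1 : (0:ℝ) < (x + 1) / 2 := by linarith
  have hd1 : HasDerivAt (fun x : ℝ => (x + 1) / 2) (1 / 2) x := by
    simpa using ((hasDerivAt_id x).add_const 1).div_const 2
  have hlog1 : HasDerivAt (fun x : ℝ => (1/2) * Real.log ((x + 1) / 2))
      ((1/2) * ((1/2) / ((x+1)/2))) x := (hd1.log (ne_of_gt h1)).const_mul _
  have hlog2 : HasDerivAt (fun x : ℝ => (1/4) * Real.log x) ((1/4) * x⁻¹) x :=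
    (Real.hasDerivAt_log (ne_of_gt hx)).const_mul _
  have hd2 : HasDerivAt (fun x : ℝ => (x + 1) / 4 - cAG) (1 / 4) x := by
    simpa using (((hasDerivAt_id x).add_const 1).div_const 4).sub_const cAG
  have hinv : HasDerivAt (fun x : ℝ => x⁻¹) (-(x^2)⁻¹) x := by
    simpa using (hasDerivAt_inv (ne_of_gt hx))
  have hq : HasDerivAt (fun x : ℝ => ((x + 1) / 4 - cAG) / x)
      ((1/4) * x⁻¹ + ((x+1)/4 - cAG) * (-(x^2)⁻¹)) x := by
    have h := hd2.mul hinv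
    simp only [Pi.mul_def] at h
    simpa [div_eq_mul_inv] using h
  have : HasDerivAt g1 ((1/2) * ((1/2) / ((x+1)/2)) + 0 - (1/4) * x⁻¹
      - ((1/4) * x⁻¹ + ((x+1)/4 - cAG) * (-(x^2)⁻¹)) - 0) x := by
    exact ((((hlog1.add (hasDerivAt_const x (1/2:ℝ))).sub hlog2).sub hq).sub
      (hasDerivAt_const x cAG))
  convert this using 1
  unfold g2
  field_simp
  ring

lemma g2_nonneg {x : ℝ} (hx : 0 < x) : 0 ≤ g2 x := by
  have hs : Real.sqrt 2 ^ 2 = 2 := Real.sq_sqrt (by norm_num)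
  have key : g2 x = (x - (Real.sqrt 2 - 1)) ^ 2 / (4 * x ^ 2 * (x + 1)) := by
    unfold g2 cAG
    have hx' : x ≠ 0 := ne_of_gt hx
    have hx1 : x + 1 ≠ 0 := by positivity
    field_simp
    linear_combination (-2) * hs
  rw [key]
  positivity

lemma g1_one : g1 1 = 0 := by
  unfold g1; norm_num

lemma gfun_one : gfun 1 = 0 := by
  unfold gfun; norm_num

lemma g1_mono : MonotoneOn g1 (Set.Ioi (0:ℝ)) := by
  apply monotoneOn_of_deriv_nonneg (convex_Ioi 0)
  · exact fun x hx => (hasDerivAt_g1 hx).continuousAt.continuousWithinAt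
  · intro x hx
    rw [interior_Ioi] at hx
    exact (hasDerivAt_g1 hx).differentiableAt.differentiableWithinAt
  · intro x hx
    rw [interior_Ioi] at hx
    rw [(hasDerivAt_g1 hx).deriv]
    exact g2_nonneg hx

lemma gfun_nonneg {x : ℝ} (hx : 0 < x) : 0 ≤ gfun x := by
  rcases le_or_gt 1 x with h | h
  · -- monotone on Ici 1
    have hmono : MonotoneOn gfun (Set.Ici (1:ℝ)) := by
      apply monotoneOn_of_deriv_nonneg (convex_Ici 1)
      · intro t ht
        exact (hasDerivAt_gfun (lt_of_lt_of_le one_pos ht)).continuousAt.continuousWithinAt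
      · intro t ht
        rw [interior_Ici] at ht
        exact (hasDerivAt_gfun (lt_trans one_pos ht)).differentiableAt.differentiableWithinAt
      · intro t ht
        rw [interior_Ici] at ht
        have ht0 : (0:ℝ) < t := lt_trans one_pos ht
        rw [(hasDerivAt_gfun ht0).deriv]
        have := g1_mono (Set.mem_Ioi.2 one_pos) (Set.mem_Ioi.2 ht0) (le_of_lt ht)
        rw [g1_one] at this
        exact this
    have := hmono (Set.mem_Ici.2 le_rfl) (Set.mem_Ici.2 h) h
    rwa [gfun_one] at this
  · -- antitone on Ioc 0 1
    have hanti : AntitoneOn gfun (Set.Icc x 1) := by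
      apply antitoneOn_of_deriv_nonpos (convex_Icc x 1)
      · intro t ht
        exact (hasDerivAt_gfun (lt_of_lt_of_le hx ht.1)).continuousAt.continuousWithinAt
      · intro t ht
        rw [interior_Icc] at ht
        exact (hasDerivAt_gfun (lt_of_lt_of_le hx (le_of_lt ht.1))).differentiableAt.differentiableWithinAt
      · intro t ht
        rw [interior_Icc] at ht
        have ht0 : (0:ℝ) < t := lt_of_lt_of_le hx (le_of_lt ht.1)
        rw [(hasDerivAt_gfun ht0).deriv]
        have := g1_mono (Set.mem_Ioi.2 ht0) (Set.mem_Ioi.2 one_pos) (le_of_lt ht.2)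
        rw [g1_one] at this
        exact this
    have := hanti (Set.mem_Icc.2 ⟨le_rfl, le_of_lt h⟩) (Set.mem_Icc.2 ⟨le_of_lt h, le_rfl⟩) (le_of_lt h)
    rwa [gfun_one] at this

lemma term_identity (a b : ℝ) (ha : 0 < a) (hb : 0 < b) :
    (((a+b)/2) * Real.log ((a+b)/(2*a)) + ((a+b)/2) * Real.log ((a+b)/(2*b))) / 2
      - cAG * (b * Real.log (b/a))
    = b * gfun (a/b) + cAG * (a - b) := by
  have hab : (0:ℝ) < a + b := by linarith
  have e1 : (a/b+1)/2 = (a+b)/(2*b) := by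
    rw [div_add' _ _ _ (ne_of_gt hb)]
    rw [div_div]
    ring_nf
  unfold gfun
  rw [e1, Real.log_div (ne_of_gt hab) (by positivity), Real.log_div (ne_of_gt hab) (by positivity),
    Real.log_mul (by norm_num) (ne_of_gt ha), Real.log_mul (by norm_num) (ne_of_gt hb),
    Real.log_div (ne_of_gt hb) (ne_of_gt ha), Real.log_div (ne_of_gt ha) (ne_of_gt hb)]
  field_simp
  ring

lemma term_hell (a b : ℝ) (ha : 0 < a) (hb : 0 < b) :
    (1/2) * (Real.sqrt a - Real.sqrt b)^2
      ≤ (((a+b)/2) * Real.log ((a+b)/(2*a)) + ((a+b)/2) * Real.log ((a+b)/(2*b))) / 2 := by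
  set m : ℝ := (a+b)/2 with hm
  set s : ℝ := Real.sqrt a * Real.sqrt b with hs
  have hm0 : 0 < m := by positivity
  have hs0 : 0 < s := by positivity
  have hsq : s^2 = a * b := by
    rw [hs, mul_pow, Real.sq_sqrt ha.le, Real.sq_sqrt hb.le]
  have hlhs : (1/2) * (Real.sqrt a - Real.sqrt b)^2 = m - s := by
    have h1 : Real.sqrt a ^ 2 = a := Real.sq_sqrt ha.le
    have h2 : Real.sqrt b ^ 2 = b := Real.sq_sqrt hb.le
    rw [hm, hs]; nlinarith [h1, h2]
  have hrhs : (((a+b)/2) * Real.log ((a+b)/(2*a)) + ((a+b)/2) * Real.log ((a+b)/(2*b))) / 2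
      = m * (Real.log m - Real.log s) := by
    have hab : (0:ℝ) < a + b := by linarith
    have hlogs : Real.log s = (Real.log a + Real.log b) / 2 := by
      rw [hs, Real.log_mul (by positivity) (by positivity), Real.log_sqrt ha.le,
        Real.log_sqrt hb.le]; ring
    rw [Real.log_div (ne_of_gt hab) (by positivity), Real.log_div (ne_of_gt hab) (by positivity),
      Real.log_mul (by norm_num) (ne_of_gt ha), Real.log_mul (by norm_num) (ne_of_gt hb),
      hlogs, hm]
    have : Real.log m = Real.log (a+b) - Real.log 2 := by
      rw [hm, Real.log_div (ne_of_gt hab) (by norm_num)]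
    rw [this]; ring
  rw [hlhs, hrhs]
  have hkey : Real.log (s/m) ≤ s/m - 1 := Real.log_le_sub_one_of_pos (by positivity)
  rw [Real.log_div (ne_of_gt hs0) (ne_of_gt hm0)] at hkey
  have : m - s ≤ m * (Real.log m - Real.log s) := by
    have h := mul_le_mul_of_nonneg_left hkey hm0.le
    have h2 : m * (s/m - 1) = s - m := by field_simp
    nlinarith [h, h2]
  linarith

lemma AGdiv_term {n : ℕ} (p q : Fin n → ℝ) :
    AGdiv p q = ∑ i, (((p i + q i)/2) * Real.log ((p i + q i)/(2 * p i))
      + ((p i + q i)/2) * Real.log ((p i + q i)/(2 * q i))) / 2 := by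
  unfold AGdiv relAG
  rw [← Finset.sum_div, ← Finset.sum_add_distrib]
  congr 1
  apply Finset.sum_congr rfl
  intro i _
  ring_nf

lemma AGdiv_symm {n : ℕ} (p q : Fin n → ℝ) : AGdiv p q = AGdiv q p := by
  unfold AGdiv; ring

lemma main1 {n : ℕ} (p q : Fin n → ℝ)
    (hp : ∀ i, 0 < p i) (hq : ∀ i, 0 < q i)
    (hp1 : ∑ i, p i = 1) (hq1 : ∑ i, q i = 1) :
    cAG * KL q p ≤ AGdiv p q := by
  have key : AGdiv p q - cAG * KL q p
      = ∑ i, (q i * gfun (p i / q i) + cAG * (p i - q i)) := by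
    rw [AGdiv_term]
    unfold KL
    rw [Finset.mul_sum, ← Finset.sum_sub_distrib]
    apply Finset.sum_congr rfl
    intro i _
    exact term_identity (p i) (q i) (hp i) (hq i)
  have hsum : ∑ i, (q i * gfun (p i / q i) + cAG * (p i - q i))
      = (∑ i, q i * gfun (p i / q i)) + cAG * ((∑ i, p i) - (∑ i, q i)) := by
    rw [Finset.sum_add_distrib, ← Finset.mul_sum, Finset.sum_sub_distrib]
  have hnn : 0 ≤ ∑ i, q i * gfun (p i / q i) :=
    Finset.sum_nonneg fun i _ =>
      mul_nonneg (hq i).le (gfun_nonneg (div_pos (hp i) (hq i)))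
  have : 0 ≤ AGdiv p q - cAG * KL q p := by
    rw [key, hsum, hp1, hq1]
    simpa using hnn
  linarith

theorem stmt17 {n : ℕ} (hn : 2 ≤ n) (p q : Fin n → ℝ)
    (hp : ∀ i, 0 < p i) (hq : ∀ i, 0 < q i)
    (hp1 : ∑ i, p i = 1) (hq1 : ∑ i, q i = 1) :
    ((Real.sqrt 2 - 1) / 2) * KL q p ≤ AGdiv p q ∧
      ((Real.sqrt 2 - 1) / 2) * KL p q ≤ AGdiv p q ∧
        hell p q ≤ AGdiv p q := by
  refine ⟨main1 p q hp hq hp1 hq1, ?_, ?_⟩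
  · rw [AGdiv_symm]
    exact main1 q p hq hp hq1 hp1
  · rw [AGdiv_term]
    unfold hell
    rw [Finset.mul_sum]
    apply Finset.sum_le_sum
    intro i _
    simpa using term_hell (p i) (q i) (hp i) (hq i)
end

section
/- For all P, Q ∈ Γ_n, J(P||Q) = 4[I(P||Q) + T(P||Q)]. -/
open Real

theorem stmt18 {n : ℕ} (hn : 2 ≤ n) (p q : Fin n → ℝ)
    (hp : ∀ i, 0 < p i) (hq : ∀ i, 0 < q i)
    (hp1 : ∑ i, p i = 1) (hq1 : ∑ i, q i = 1) :
    Jdiv p q = 4 * (JSdiv p q + AGdiv p q) := by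
  simp only [Jdiv, JSdiv, AGdiv, relJS, relAG, ← add_div, mul_div_assoc, mul_comm,
    ← Finset.sum_add_distrib, Finset.mul_sum, ← Finset.sum_div]
  rw [mul_div_assoc', Finset.mul_sum, Finset.sum_div]
  apply Finset.sum_congr rfl
  intro i _
  have hpi := hp i
  have hqi := hq i
  have hpq : 0 < p i + q i := by linarith
  rw [Real.log_div hpi.ne' hqi.ne']
  simp only [add_comm (q i) (p i), Real.log_mul hpi.ne' (by positivity : (2/(p i + q i):ℝ) ≠ 0),
    Real.log_mul hqi.ne' (by positivity : (2/(p i + q i):ℝ) ≠ 0),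
    Real.log_div (two_ne_zero) hpq.ne',
    Real.log_div hpq.ne' (by positivity : (p i * 2:ℝ) ≠ 0),
    Real.log_div hpq.ne' (by positivity : (q i * 2:ℝ) ≠ 0),
    Real.log_mul hpi.ne' (two_ne_zero), Real.log_mul hqi.ne' (two_ne_zero)]
  ring
end
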